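/- Let V be a 2g-dimensional complex vector space (g ≥ 2) with conjugation c and a decomposition V = W ⊕ c(W) with dim W = g. In the Grassmannian of real 2-planes P of the real points of V, the set of planes P with P_ℂ ∩ W ≠ 0 is a proper closed subset; in particular, there exists a symplectic 2-plane P (with respect to a given nondegenerate symplectic form on the real points whose symplectic planes form a nonempty open set) with P_ℂ ∩ W = 0. -/
import Mathlib

open MvPolynomial

lemma aux_dep_iff {ι : Type*} (x y : ι → ℂ) :
    (∃ a b : ℂ, (a ≠ 0 ∨ b ≠ 0) ∧ a • x + b • y = 0) ↔ ∀ i j, x i * y j = x j * y i := by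
  constructor
  · rintro ⟨a, b, hab, h⟩ i j
    have h' : ∀ k, a * x k + b * y k = 0 := fun k => congrFun h k
    rcases eq_or_ne a 0 with ha | ha
    · have hb : b ≠ 0 := hab.resolve_left (by simp [ha])
      have hy : ∀ k, y k = 0 := fun k => by
        have := h' k; rw [ha] at this; simpa [hb] using this
      simp [hy]
    · apply mul_left_cancel₀ ha
      linear_combination y j * h' i - y i * h' j
  · intro h
    by_cases hx : x = 0
    · exact ⟨1, 0, Or.inl one_ne_zero, by simp [hx]⟩
    · obtain ⟨i₀, hi₀⟩ := Function.ne_iff.mp hx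
      refine ⟨y i₀, -(x i₀), Or.inr (by simpa using hi₀), ?_⟩
      funext k
      have := h k i₀
      simp only [Pi.add_apply, Pi.smul_apply, smul_eq_mul, Pi.zero_apply, neg_mul]
      linear_combination this

noncomputable def rePoly {σ : Type*} (P : MvPolynomial σ ℂ) : MvPolynomial σ ℝ :=
  ∑ m ∈ P.support, monomial m (P.coeff m).re

noncomputable def imPoly {σ : Type*} (P : MvPolynomial σ ℂ) : MvPolynomial σ ℝ :=
  ∑ m ∈ P.support, monomial m (P.coeff m).im

lemma eval_rePoly {σ : Type*} (P : MvPolynomial σ ℂ) (x : σ → ℝ) :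
    eval x (rePoly P) = (eval (fun s => (x s : ℂ)) P).re := by
  rw [eval_eq (fun s => (x s : ℂ)) P, Complex.re_sum, rePoly, map_sum]
  refine Finset.sum_congr rfl fun m _ => ?_
  rw [eval_monomial, Finsupp.prod]
  have h1 : (∏ i ∈ m.support, ((x i : ℂ)) ^ m i) = ((∏ i ∈ m.support, x i ^ m i : ℝ) : ℂ) := by
    push_cast; ring
  rw [h1, Complex.mul_re]
  simp only [Complex.ofReal_re, Complex.ofReal_im, mul_zero, sub_zero]

lemma eval_imPoly {σ : Type*} (P : MvPolynomial σ ℂ) (x : σ → ℝ) :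
    eval x (imPoly P) = (eval (fun s => (x s : ℂ)) P).im := by
  rw [eval_eq (fun s => (x s : ℂ)) P, Complex.im_sum, imPoly, map_sum]
  refine Finset.sum_congr rfl fun m _ => ?_
  rw [eval_monomial, Finsupp.prod]
  have h1 : (∏ i ∈ m.support, ((x i : ℂ)) ^ m i) = ((∏ i ∈ m.support, x i ^ m i : ℝ) : ℂ) := by
    push_cast; ring
  rw [h1, Complex.mul_im]
  simp only [Complex.ofReal_re, Complex.ofReal_im, mul_zero, zero_add]

/-- For `V = ℂ^{2g}` (`g ≥ 2`) with conjugation `c` and `V = W ⊕ c(W)`, `dim W = g`,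
the set of real 2-planes `P` of the real points with `P_ℂ ∩ W ≠ 0` is Zariski closed
in the Grassmannian (cut out by polynomials in the real coordinates of spanning pairs)
and proper: there is a symplectic 2-plane `P` with `P_ℂ ∩ W = 0`. -/
theorem stmt14 (g : ℕ) (hg : 2 ≤ g)
    (c : (Fin (2 * g) → ℂ) →ₗ[ℝ] (Fin (2 * g) → ℂ))
    (hc_inv : ∀ v, c (c v) = v)
    (hc_anti : ∀ (a : ℂ) v, c (a • v) = (starRingEnd ℂ a) • c v)
    (W W' : Submodule ℂ (Fin (2 * g) → ℂ))
    (hW' : (W' : Set (Fin (2 * g) → ℂ)) = c '' (W : Set (Fin (2 * g) → ℂ)))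
    (hWdim : Module.finrank ℂ W = g) (hcompl : IsCompl W W')
    (R : Submodule ℝ (Fin (2 * g) → ℂ)) (hR : ∀ v, v ∈ R ↔ c v = v)
    (ω : (Fin (2 * g) → ℂ) →ₗ[ℝ] (Fin (2 * g) → ℂ) →ₗ[ℝ] ℝ)
    (hωalt : ∀ v, ω v v = 0)
    (hωnd : ∀ v ∈ R, (∀ w ∈ R, ω v w = 0) → v = 0) :
    (∃ F : Set (MvPolynomial (Bool × Fin (2 * g) × Bool) ℝ),
      ∀ u v : Fin (2 * g) → ℂ, u ∈ R → v ∈ R → LinearIndependent ℝ ![u, v] →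
        ((Submodule.span ℂ ({u, v} : Set (Fin (2 * g) → ℂ)) ⊓ W ≠ ⊥) ↔
          ∀ p ∈ F, MvPolynomial.eval
            (fun q => if q.2.2 then (if q.1 then u q.2.1 else v q.2.1).re
                      else (if q.1 then u q.2.1 else v q.2.1).im) p = 0)) ∧
    (∃ P : Submodule ℝ (Fin (2 * g) → ℂ), P ≤ R ∧ Module.finrank ℝ P = 2 ∧
      (∃ u ∈ P, ∃ v ∈ P, ω u v ≠ 0) ∧
      Submodule.span ℂ (P : Set (Fin (2 * g) → ℂ)) ⊓ W = ⊥) := by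
  classical
  -- the projection onto W' along W
  set π : (Fin (2 * g) → ℂ) →ₗ[ℂ] (Fin (2 * g) → ℂ) :=
    W'.subtype.comp (W'.linearProjOfIsCompl W hcompl.symm) with hπdef
  have hπ0 : ∀ x, π x = 0 ↔ x ∈ W := by
    intro x
    rw [hπdef]
    simp only [LinearMap.comp_apply, Submodule.subtype_apply, Submodule.coe_eq_zero]
    exact Submodule.linearProjOfIsCompl_apply_eq_zero_iff hcompl.symm
  have hπmem : ∀ x, π x ∈ W' := fun x => (W'.linearProjOfIsCompl W hcompl.symm x).2
  -- basic conjugation facts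
  have hcWW' : ∀ y, y ∈ W → c y ∈ W' := fun y hy => by
    rw [← SetLike.mem_coe, hW']; exact ⟨y, hy, rfl⟩
  have hcW'W : ∀ y, y ∈ W' → c y ∈ W := fun y hy => by
    rw [← SetLike.mem_coe, hW'] at hy
    obtain ⟨z, hz, rfl⟩ := hy
    rw [hc_inv]; exact hz
  have hWW' : ∀ y ∈ W, y ∈ W' → y = 0 :=
    fun y hy hy' => Submodule.disjoint_def.mp hcompl.disjoint y hy hy'
  constructor
  · -- Part 1: the Zariski-closed condition
    set M : Fin (2 * g) → Fin (2 * g) → ℂ :=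
      fun i j => π (fun k => if j = k then 1 else 0) i with hMdef
    have hM : ∀ (z : Fin (2 * g) → ℂ) i, π z i = ∑ j, M i j * z j := by
      intro z i
      rw [LinearMap.pi_apply_eq_sum_univ π z]
      rw [Finset.sum_apply]
      refine Finset.sum_congr rfl fun j _ => ?_
      simp [hMdef, mul_comm]
    set Zp : Bool → Fin (2 * g) → MvPolynomial (Bool × Fin (2 * g) × Bool) ℂ :=
      fun b j => MvPolynomial.X (b, j, true) +
        MvPolynomial.C Complex.I * MvPolynomial.X (b, j, false) with hZdef
    set PP : Bool → Fin (2 * g) → MvPolynomial (Bool × Fin (2 * g) × Bool) ℂ :=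
      fun b i => ∑ j, MvPolynomial.C (M i j) * Zp b j with hPPdef
    set Q : Fin (2 * g) → Fin (2 * g) → MvPolynomial (Bool × Fin (2 * g) × Bool) ℂ :=
      fun i j => PP true i * PP false j - PP true j * PP false i with hQdef
    refine ⟨{p | ∃ i j, p = rePoly (Q i j) ∨ p = imPoly (Q i j)}, ?_⟩
    intro u v hu hv hind
    set xr : Bool × Fin (2 * g) × Bool → ℝ :=
      fun q => if q.2.2 then (if q.1 then u q.2.1 else v q.2.1).re
               else (if q.1 then u q.2.1 else v q.2.1).im with hxrdef
    set xc : Bool × Fin (2 * g) × Bool → ℂ := fun s => ((xr s : ℝ) : ℂ) with hxcdef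
    have hevalZ : ∀ b j, MvPolynomial.eval xc (Zp b j) = (if b then u j else v j) := by
      intro b j
      have hz : ∀ z : ℂ, (z.re : ℂ) + Complex.I * (z.im : ℂ) = z := fun z => by
        rw [mul_comm]; exact Complex.re_add_im z
      cases b <;>
        simp [hZdef, hxcdef, hxrdef, hz]
    have hevalP : ∀ b, MvPolynomial.eval xc ∘ PP b = π (if b then u else v) := by
      intro b
      funext i
      rw [Function.comp_apply, hPPdef]
      rw [map_sum, hM]
      refine Finset.sum_congr rfl fun j _ => ?_
      rw [map_mul, MvPolynomial.eval_C, hevalZ]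
      cases b <;> simp
    have hevalQ : ∀ i j, MvPolynomial.eval xc (Q i j)
        = π u i * π v j - π u j * π v i := by
      intro i j
      rw [hQdef]
      simp only [map_sub, map_mul]
      have h1 := congrFun (hevalP true)
      have h2 := congrFun (hevalP false)
      simp only [Function.comp_apply, if_true, if_false] at h1 h2
      rw [h1, h1, h2, h2]
      simp
    -- complex independence from real independence
    rw [LinearIndependent.pair_iff] at hind
    have hu' : c u = u := (hR u).mp hu
    have hv' : c v = v := (hR v).mp hv
    have hre : ∀ a b : ℂ, a • u + b • v = 0 → a.re = 0 ∧ b.re = 0 := by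
      intro a b h
      have h2 : (starRingEnd ℂ a) • u + (starRingEnd ℂ b) • v = 0 := by
        have h2' := congrArg c h
        rwa [map_add, hc_anti, hc_anti, hu', hv', map_zero] at h2'
      have h4 : (a + starRingEnd ℂ a) • u + (b + starRingEnd ℂ b) • v
          = (a • u + b • v) + ((starRingEnd ℂ a) • u + (starRingEnd ℂ b) • v) := by
        rw [add_smul, add_smul]; abel
      rw [h, h2, add_zero] at h4
      have h5 : ((2 * a.re : ℝ) : ℂ) • u + ((2 * b.re : ℝ) : ℂ) • v = 0 := by
        rw [← h4]
        congr 1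
        all_goals congr 1
        all_goals rw [Complex.add_conj]
      rw [← Complex.coe_algebraMap, algebraMap_smul, algebraMap_smul] at h5
      obtain ⟨ha, hb⟩ := hind _ _ h5
      constructor <;> linarith
    have hCind : ∀ a b : ℂ, a • u + b • v = 0 → a = 0 ∧ b = 0 := by
      intro a b h
      obtain ⟨ha1, hb1⟩ := hre a b h
      have h5 : (Complex.I * a) • u + (Complex.I * b) • v = 0 := by
        rw [mul_smul, mul_smul, ← smul_add, h, smul_zero]
      obtain ⟨ha2, hb2⟩ := hre _ _ h5
      simp only [Complex.mul_re, Complex.I_re, Complex.I_im, zero_mul, one_mul,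
        zero_sub, neg_eq_zero] at ha2 hb2
      exact ⟨Complex.ext ha1 ha2, Complex.ext hb1 hb2⟩
    -- the key equivalence
    have key1 : (Submodule.span ℂ ({u, v} : Set (Fin (2 * g) → ℂ)) ⊓ W ≠ ⊥) ↔
        (∃ a b : ℂ, (a ≠ 0 ∨ b ≠ 0) ∧ a • (π u) + b • (π v) = 0) := by
      constructor
      · intro hne
        obtain ⟨z, hz, hz0⟩ := Submodule.exists_mem_ne_zero_of_ne_bot hne
        rw [Submodule.mem_inf] at hz
        obtain ⟨a, b, hab⟩ := Submodule.mem_span_pair.mp hz.1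
        refine ⟨a, b, ?_, ?_⟩
        · by_contra hc0
          push_neg at hc0
          apply hz0
          rw [← hab, hc0.1, hc0.2, zero_smul, zero_smul, add_zero]
        · have hz2 : π z = 0 := (hπ0 z).mpr hz.2
          rw [← hab, map_add, map_smul, map_smul] at hz2
          exact hz2
      · rintro ⟨a, b, hab, h⟩
        have hWmem : a • u + b • v ∈ W := by
          rw [← hπ0, map_add, map_smul, map_smul]
          exact h
        have hne0 : a • u + b • v ≠ 0 := by
          intro h0
          obtain ⟨h1, h2⟩ := hCind a b h0
          rcases hab with h3 | h3 <;> [exact h3 h1; exact h3 h2]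
        exact Submodule.ne_bot_iff _ |>.mpr
          ⟨a • u + b • v,
            Submodule.mem_inf.mpr ⟨Submodule.mem_span_pair.mpr ⟨a, b, rfl⟩, hWmem⟩, hne0⟩
    rw [key1, aux_dep_iff]
    constructor
    · rintro h p ⟨i, j, rfl | rfl⟩
      · rw [eval_rePoly, hevalQ i j, sub_eq_zero.mpr (h i j)]
        simp
      · rw [eval_imPoly, hevalQ i j, sub_eq_zero.mpr (h i j)]
        simp
    · intro h i j
      have h1 := h (rePoly (Q i j)) ⟨i, j, Or.inl rfl⟩
      have h2 := h (imPoly (Q i j)) ⟨i, j, Or.inr rfl⟩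
      rw [eval_rePoly, hevalQ i j] at h1
      rw [eval_imPoly, hevalQ i j] at h2
      have : π u i * π v j - π u j * π v i = 0 := Complex.ext h1 h2
      exact sub_eq_zero.mp this
  · -- Part 2: existence of a good symplectic plane
    set πW : (Fin (2 * g) → ℂ) →ₗ[ℂ] (Fin (2 * g) → ℂ) :=
      W.subtype.comp (W.linearProjOfIsCompl W' hcompl) with hπWdef
    have hπWmem : ∀ x, πW x ∈ W := fun x => (W.linearProjOfIsCompl W' hcompl x).2
    have hdecomp : ∀ z, πW z + π z = z := fun z =>
      Submodule.projection_add_projection_eq_self hcompl z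
    -- every real point is of the form w + c w with w ∈ W
    have hRdecomp : ∀ z ∈ R, z = πW z + c (πW z) := by
      intro z hz
      have h1 : πW z + π z = z := hdecomp z
      have hcz : c z = z := (hR z).mp hz
      have h2 : c (πW z) + c (π z) = z := by rw [← map_add, h1, hcz]
      have h3 : πW z + π z = c (πW z) + c (π z) := by rw [h1, h2]
      have h4 : πW z - c (π z) = c (πW z) - π z := sub_eq_sub_iff_add_eq_add.mpr h3
      have h5 : πW z - c (π z) = 0 := by
        apply hWW'
        · exact sub_mem (hπWmem z) (hcW'W _ (hπmem z))
        · rw [h4]; exact sub_mem (hcWW' _ (hπWmem z)) (hπmem z)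
      have h6 : c (π z) = πW z := by rw [sub_eq_zero] at h5; exact h5.symm
      have h7 : π z = c (πW z) := by rw [← h6, hc_inv]
      nth_rewrite 1 [← h1]
      rw [h7]
    -- pick a nonzero w ∈ W
    have hWne : W ≠ ⊥ := by
      intro h0
      rw [h0, finrank_bot] at hWdim
      omega
    obtain ⟨w, hwW, hw0⟩ := Submodule.exists_mem_ne_zero_of_ne_bot hWne
    -- u = w + c w is a nonzero real point
    have hmemR : ∀ y, y ∈ W → y + c y ∈ R := by
      intro y hy
      rw [hR, map_add, hc_inv, add_comm]
    have hne0 : ∀ y ∈ W, y ≠ 0 → y + c y ≠ 0 := by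
      intro y hy hy0 h0
      apply hy0
      apply hWW' y hy
      have : c y = -y := by rwa [add_comm, ← eq_neg_iff_add_eq_zero] at h0
      rw [← neg_mem_iff, ← this]
      exact hcWW' y hy
    set u : Fin (2 * g) → ℂ := w + c w with hudef
    have huR : u ∈ R := hmemR w hwW
    have hu0 : u ≠ 0 := hne0 w hwW hw0
    -- find a real point pairing nontrivially with u
    have hex : ∃ x ∈ R, ω u x ≠ 0 := by
      by_contra h0
      push_neg at h0
      exact hu0 (hωnd u huR h0)
    obtain ⟨x, hxR, hx⟩ := hex
    set w₁ : Fin (2 * g) → ℂ := πW x with hw₁def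
    have hw₁W : w₁ ∈ W := hπWmem x
    have hxeq : x = w₁ + c w₁ := hRdecomp x hxR
    -- pick z ∈ W not in the span of w
    have hzex : ∃ z ∈ W, z ∉ Submodule.span ℂ {w} := by
      by_contra h0
      push_neg at h0
      have hle : W ≤ Submodule.span ℂ {w} := h0
      have := Submodule.finrank_mono (R := ℂ) hle
      rw [hWdim, finrank_span_singleton hw0] at this
      omega
    obtain ⟨z, hzW, hzspan⟩ := hzex
    -- find w₂ ∈ W, independent from w, with ω u (w₂ + c w₂) ≠ 0
    have hWpair : ∃ w₂ ∈ W, w₂ ∉ Submodule.span ℂ {w} ∧ ω u (w₂ + c w₂) ≠ 0 := by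
      by_cases h1 : w₁ ∈ Submodule.span ℂ {w}
      · by_cases h2 : ω u (z + c z) ≠ 0
        · exact ⟨z, hzW, hzspan, h2⟩
        · push_neg at h2
          refine ⟨w₁ + z, add_mem hw₁W hzW, ?_, ?_⟩
          · intro hmem
            apply hzspan
            have := sub_mem hmem h1
            simpa using this
          · have heq : (w₁ + z) + c (w₁ + z) = (w₁ + c w₁) + (z + c z) := by
              rw [map_add]; abel
            rw [heq, map_add, h2, add_zero, ← hxeq]
            exact hx
      · exact ⟨w₁, hw₁W, h1, by rw [← hxeq]; exact hx⟩
    obtain ⟨w₂, hw₂W, hw₂span, hωuv⟩ := hWpair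
    set v : Fin (2 * g) → ℂ := w₂ + c w₂ with hvdef
    have hvR : v ∈ R := hmemR w₂ hw₂W
    -- complex independence of w and w₂
    have hCpair : ∀ a b : ℂ, a • w + b • w₂ = 0 → a = 0 ∧ b = 0 := by
      intro a b h
      by_cases hb : b = 0
      · subst hb
        rw [zero_smul, add_zero, smul_eq_zero] at h
        exact ⟨h.resolve_right hw0, rfl⟩
      · exfalso
        apply hw₂span
        rw [Submodule.mem_span_singleton]
        refine ⟨-a / b, ?_⟩
        have hb' : b • w₂ = -(a • w) := eq_neg_of_add_eq_zero_right h
        have : w₂ = b⁻¹ • (b • w₂) := by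
          rw [smul_smul, inv_mul_cancel₀ hb, one_smul]
        rw [this, hb', smul_neg, smul_smul, ← neg_smul]
        congr 1
        field_simp
    -- real independence of u and v
    have hli : LinearIndependent ℝ ![u, v] := by
      rw [LinearIndependent.pair_iff]
      intro s t h
      have h1 : ω u (s • u + t • v) = 0 := by rw [h, map_zero]
      rw [map_add, map_smul, map_smul, hωalt, smul_eq_mul, smul_eq_mul,
        mul_zero, zero_add] at h1
      have ht : t = 0 := by
        rcases mul_eq_zero.mp h1 with h' | h'
        · exact h'
        · exact absurd h' hωuv
      subst ht
      rw [zero_smul, add_zero, smul_eq_zero] at h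
      exact ⟨h.resolve_right hu0, rfl⟩
    refine ⟨Submodule.span ℝ {u, v}, ?_, ?_, ?_, ?_⟩
    · rw [Submodule.span_le]
      rintro y (rfl | rfl)
      · exact huR
      · exact hvR
    · have hrange : Set.range ![u, v] = {u, v} := by
        ext t
        simp [Fin.exists_fin_two, or_comm]
      have := finrank_span_eq_card (R := ℝ) hli
      rw [hrange] at this
      rw [this]
      simp
    · exact ⟨u, Submodule.subset_span (by simp), v, Submodule.subset_span (by simp), hωuv⟩
    · rw [Submodule.span_span_of_tower ℝ ℂ ({u, v} : Set (Fin (2 * g) → ℂ))]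
      rw [eq_bot_iff]
      intro y hy
      rw [Submodule.mem_inf] at hy
      obtain ⟨a, b, hab⟩ := Submodule.mem_span_pair.mp hy.1
      have hysplit : y = (a • w + b • w₂) + (a • c w + b • c w₂) := by
        rw [← hab, hudef, hvdef, smul_add, smul_add]; abel
      have hWpart : a • w + b • w₂ ∈ W := add_mem (W.smul_mem a hwW) (W.smul_mem b hw₂W)
      have hW'part : a • c w + b • c w₂ ∈ W' :=
        add_mem (W'.smul_mem a (hcWW' w hwW)) (W'.smul_mem b (hcWW' w₂ hw₂W))
      have hzero : a • c w + b • c w₂ = 0 := by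
        apply hWW'
        · have : a • c w + b • c w₂ = y - (a • w + b • w₂) := by rw [hysplit]; abel
          rw [this]
          exact sub_mem hy.2 hWpart
        · exact hW'part
      have hczero : (starRingEnd ℂ a) • w + (starRingEnd ℂ b) • w₂ = 0 := by
        have := congrArg c hzero
        rwa [map_add, hc_anti, hc_anti, hc_inv, hc_inv, map_zero] at this
      obtain ⟨ha, hb⟩ := hCpair _ _ hczero
      have ha0 : a = 0 := by
        have := congrArg (starRingEnd ℂ) ha
        simpa using this
      have hb0 : b = 0 := by
        have := congrArg (starRingEnd ℂ) hb
        simpa using this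
      rw [Submodule.mem_bot, ← hab, ha0, hb0, zero_smul, zero_smul, add_zero]
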